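/- arXiv:1512.08750 — 3 statements merged into one kernel-verified Lean document; each statement's English description precedes it below -/
import Mathlib

section
/- A function x : 𝕋₀ → ℝ^{mn} is a solution of the SICNN on 𝕋₀ (i.e., x satisfies the differential equation on each interval [θ_{2k−1}, θ_{2k}] together with the difference relations x_{ij}(θ_{2k+1}) = (1 − δ_k a_{ij}) x_{ij}(θ_{2k}) − δ_k Σ_{C_{hl}∈N_r(i,j)} C_{ij}^{hl} f(x_{hl}(θ_{2k})) x_{ij}(θ_{2k}) + δ_k ζ_k^{ij}) if and only if the function y defined by y(s) = x(ψ⁻¹(s)) is a solution of the associated impulsive system on ℝ. -/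
open Filter Topology MeasureTheory

noncomputable section

/-- `δ_k = θ_{2k+1} - θ_{2k}`. -/
def tdelta (θ : ℤ → ℝ) (k : ℤ) : ℝ := θ (2 * k + 1) - θ (2 * k)

/-- The time scale `𝕋₀ = ⋃ₖ [θ_{2k-1}, θ_{2k}]`. -/
def TScale (θ : ℤ → ℝ) : Set ℝ := ⋃ k : ℤ, Set.Icc (θ (2 * k - 1)) (θ (2 * k))

/-- `𝕋₀' = 𝕋₀ \ ⋃ₖ {θ_{2k-1}}`. -/
def TScale' (θ : ℤ → ℝ) : Set ℝ := TScale θ \ ⋃ k : ℤ, {θ (2 * k - 1)}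

/-- The ψ-substitution:  `ψ(t) = t - Σ_{0<θ_{2k}<t} δ_k` for `t ≥ 0` and
`ψ(t) = t + Σ_{t≤θ_{2k}<0} δ_k` for `t < 0`. -/
def psi (θ : ℤ → ℝ) (t : ℝ) : ℝ :=
  if 0 ≤ t then t - ∑' k : ℤ, (if 0 < θ (2 * k) ∧ θ (2 * k) < t then tdelta θ k else 0)
  else t + ∑' k : ℤ, (if t ≤ θ (2 * k) ∧ θ (2 * k) < 0 then tdelta θ k else 0)

/-- `s_k = ψ(θ_{2k})`. -/
def sk (θ : ℤ → ℝ) (k : ℤ) : ℝ := psi θ (θ (2 * k))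

/-- The inverse of the ψ-substitution:  `ψ⁻¹(s) = s + Σ_{0<s_k<s} δ_k` for `s ≥ 0` and
`ψ⁻¹(s) = s - Σ_{s≤s_k<0} δ_k` for `s < 0`. -/
def psiInv (θ : ℤ → ℝ) (s : ℝ) : ℝ :=
  if 0 ≤ s then s + ∑' k : ℤ, (if 0 < sk θ k ∧ sk θ k < s then tdelta θ k else 0)
  else s - ∑' k : ℤ, (if s ≤ sk θ k ∧ sk θ k < 0 then tdelta θ k else 0)

/-- Standing hypotheses on the time scale:  `θ` is strictly increasing with `|θ_k| → ∞` as
`|k| → ∞`, `θ_{-1} < 0 < θ_0`, both series `Σ (θ_{2k} - θ_{2k-1})` diverge, the `ω`-property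
holds, and the sequence `δ_k` is `p`-periodic with `p > 0`. -/
structure TimeScaleHyp (θ : ℤ → ℝ) (ω : ℝ) (p : ℕ) : Prop where
  mono : StrictMono θ
  tendsto_top : Tendsto θ atTop atTop
  tendsto_bot : Tendsto θ atBot atBot
  theta_neg : θ (-1) < 0
  theta_pos : 0 < θ 0
  sum_top : Tendsto
    (fun N : ℕ => ∑ k ∈ Finset.range N, (θ (2 * (k : ℤ)) - θ (2 * (k : ℤ) - 1))) atTop atTop
  sum_bot : Tendsto
    (fun N : ℕ => ∑ k ∈ Finset.range N, (θ (2 * (-(k : ℤ))) - θ (2 * (-(k : ℤ)) - 1))) atTop atTop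
  omega_pos : 0 < ω
  omega_prop : ∀ t ∈ TScale θ, t + ω ∈ TScale θ
  p_pos : 0 < p
  delta_periodic : ∀ k : ℤ, tdelta θ (k + (p : ℤ)) = tdelta θ k

/-- The `r`-neighborhood `N_r(i,j)` of the cell `C_{ij}`. -/
def Nbhd {m n : ℕ} (r : ℕ) (i : Fin m) (j : Fin n) : Finset (Fin m × Fin n) :=
  Finset.univ.filter fun q =>
    max |(q.1.val : ℤ) - (i.val : ℤ)| |(q.2.val : ℤ) - (j.val : ℤ)| ≤ (r : ℤ)

/-- `Σ_{C_{hl} ∈ N_r(i,j)} C_{ij}^{hl}`. -/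
def coupSum {m n : ℕ} (r : ℕ) (C : Fin m → Fin n → Fin m → Fin n → ℝ)
    (i : Fin m) (j : Fin n) : ℝ :=
  ∑ q ∈ Nbhd r i j, C i j q.1 q.2

/-- The shunting interaction term `Σ_{C_{hl} ∈ N_r(i,j)} C_{ij}^{hl} f(x_{hl}) x_{ij}`. -/
def interSum {m n : ℕ} (r : ℕ) (C : Fin m → Fin n → Fin m → Fin n → ℝ) (f : ℝ → ℝ)
    (x : Fin m → Fin n → ℝ) (i : Fin m) (j : Fin n) : ℝ :=
  ∑ q ∈ Nbhd r i j, C i j q.1 q.2 * f (x q.1 q.2) * x i j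

/-- `λ_{ij} = a_{ij} - (1/ψ(ω)) Σ_{ν=0}^{p-1} ln |1 - δ_ν a_{ij}|`. -/
def lamij (θ : ℤ → ℝ) (ω : ℝ) (p : ℕ) (a : ℝ) : ℝ :=
  a - (1 / psi θ ω) * ∑ ν ∈ Finset.range p, Real.log |1 - tdelta θ (ν : ℤ) * a|

/-- The Cauchy function `u_{ij}(s,τ) = e^{-a(s-τ)} ∏_{ν : τ ≤ s_ν < s} (1 - δ_ν a)`
(this unifies the two defining cases). -/
def ufun (θ : ℤ → ℝ) (a : ℝ) (s τ : ℝ) : ℝ :=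
  Real.exp (-a * (s - τ)) * ∏ᶠ (ν : ℤ) (_ : τ ≤ sk θ ν ∧ sk θ ν < s), (1 - tdelta θ ν * a)

/-- `u_{ij}(s, τ+)`, so that `u_{ij}(s, s_k+) = ufunR θ a s (sk θ k)`. -/
def ufunR (θ : ℤ → ℝ) (a : ℝ) (s τ : ℝ) : ℝ :=
  Real.exp (-a * (s - τ)) * ∏ᶠ (ν : ℤ) (_ : τ < sk θ ν ∧ sk θ ν < s), (1 - tdelta θ ν * a)

/-- A solution of the impulsive system associated with the SICNN:  on each interval
`(s_{k-1}, s_k]` the differential equation holds (with one-sided derivatives at the right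
endpoint); the solution is left-continuous on `ℝ`; and at each point `s_k` the right limit
exists and satisfies the jump condition
`Δy_{ij}|_{s_k} = -δ_k a_{ij} y_{ij}(s_k) - δ_k Σ C f y y + δ_k ζ_k^{ij}`. -/
def IsImpSol (θ : ℤ → ℝ) {m n : ℕ} (r : ℕ) (a : Fin m → Fin n → ℝ)
    (C : Fin m → Fin n → Fin m → Fin n → ℝ) (f : ℝ → ℝ)
    (L : ℝ → Fin m → Fin n → ℝ) (ζ : ℤ → Fin m → Fin n → ℝ)
    (y : ℝ → Fin m → Fin n → ℝ) : Prop :=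
  (∀ k : ℤ, ∀ s ∈ Set.Ioc (sk θ (k - 1)) (sk θ k), ∀ (i : Fin m) (j : Fin n),
      HasDerivWithinAt (fun τ => y τ i j)
        (-(a i j) * y s i j - interSum r C f (y s) i j + L (psiInv θ s) i j)
        (Set.Ioc (sk θ (k - 1)) (sk θ k)) s) ∧
  (∀ (s : ℝ) (i : Fin m) (j : Fin n),
      ContinuousWithinAt (fun τ => y τ i j) (Set.Iic s) s) ∧
  (∀ (k : ℤ) (i : Fin m) (j : Fin n),
      Tendsto (fun τ => y τ i j) (nhdsWithin (sk θ k) (Set.Ioi (sk θ k)))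
        (nhds (y (sk θ k) i j +
          (-(tdelta θ k) * a i j * y (sk θ k) i j
            - tdelta θ k * interSum r C f (y (sk θ k)) i j + tdelta θ k * ζ k i j))))

/-- A solution of the SICNN on the time scale `𝕋₀`:  on each interval `[θ_{2k-1}, θ_{2k}]`
the differential equation holds, and at the points `θ_{2k+1}` the difference relation holds. -/
def IsSICNNSol (θ : ℤ → ℝ) {m n : ℕ} (r : ℕ) (a : Fin m → Fin n → ℝ)
    (C : Fin m → Fin n → Fin m → Fin n → ℝ) (f : ℝ → ℝ)
    (L : ℝ → Fin m → Fin n → ℝ) (ζ : ℤ → Fin m → Fin n → ℝ)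
    (x : ℝ → Fin m → Fin n → ℝ) : Prop :=
  (∀ k : ℤ, ∀ t ∈ Set.Icc (θ (2 * k - 1)) (θ (2 * k)), ∀ (i : Fin m) (j : Fin n),
      HasDerivWithinAt (fun τ => x τ i j)
        (-(a i j) * x t i j - interSum r C f (x t) i j + L t i j)
        (Set.Icc (θ (2 * k - 1)) (θ (2 * k))) t) ∧
  (∀ (k : ℤ) (i : Fin m) (j : Fin n),
      x (θ (2 * k + 1)) i j =
        (1 - tdelta θ k * a i j) * x (θ (2 * k)) i j
          - tdelta θ k * interSum r C f (x (θ (2 * k))) i j + tdelta θ k * ζ k i j)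

/-- Membership in the set `𝒟₀`: left-continuous on `ℝ`, continuous off `{s_k}`, with
right limits (discontinuities of the first kind) at the `s_k`, and `‖z‖_∞ ≤ H₀`. -/
def MemD0 (θ : ℤ → ℝ) {m n : ℕ} (H0 : ℝ) (z : ℝ → Fin m → Fin n → ℝ) : Prop :=
  (∀ (s : ℝ) (i : Fin m) (j : Fin n),
      ContinuousWithinAt (fun τ => z τ i j) (Set.Iic s) s) ∧
  (∀ s : ℝ, s ∉ Set.range (sk θ) → ∀ (i : Fin m) (j : Fin n),
      ContinuousAt (fun τ => z τ i j) s) ∧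
  (∀ (k : ℤ) (i : Fin m) (j : Fin n), ∃ l : ℝ,
      Tendsto (fun τ => z τ i j) (nhdsWithin (sk θ k) (Set.Ioi (sk θ k))) (nhds l)) ∧
  (∀ s : ℝ, ‖z s‖ ≤ H0)

/-- The operator `Π` of Lemma 3.1. -/
def PiOp (θ : ℤ → ℝ) {m n : ℕ} (r : ℕ) (a : Fin m → Fin n → ℝ)
    (C : Fin m → Fin n → Fin m → Fin n → ℝ) (f : ℝ → ℝ)
    (L : ℝ → Fin m → Fin n → ℝ) (ζ : ℤ → Fin m → Fin n → ℝ)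
    (z : ℝ → Fin m → Fin n → ℝ) (s : ℝ) (i : Fin m) (j : Fin n) : ℝ :=
  -(∫ τ in Set.Iic s, ufun θ (a i j) s τ * (interSum r C f (z τ) i j - L (psiInv θ τ) i j)) -
    ∑' k : ℤ, (if sk θ k < s then
      ufunR θ (a i j) s (sk θ k) * (interSum r C f (z (sk θ k)) i j - ζ k i j) * tdelta θ k
      else 0)

/-- A pair of (bounded) solutions is proximal. -/
def ProximalPair (θ : ℤ → ℝ) {m n : ℕ} (x x' : ℝ → Fin m → Fin n → ℝ) : Prop :=
  ∀ ε : ℝ, 0 < ε → ∀ E : ℕ, ∃ k₀ : ℤ,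
    ∀ t ∈ Set.Icc (θ (2 * k₀ - 1)) (θ (2 * (k₀ + (E : ℤ)))) ∩ TScale θ,
      ‖x t - x' t‖ < ε

/-- A pair of solutions is frequently `(ε₀, ε₁)`-separated for some `ε₀, ε₁ > 0`:  there are
infinitely many disjoint intervals `J_q ⊆ 𝕋₀`, each of length at least `ε₁`, on which the two
solutions stay more than `ε₀` apart. -/
def FreqSepPair (θ : ℤ → ℝ) {m n : ℕ} (x x' : ℝ → Fin m → Fin n → ℝ) : Prop :=
  ∃ ε₀ : ℝ, 0 < ε₀ ∧ ∃ ε₁ : ℝ, 0 < ε₁ ∧ ∃ J : ℕ → Set ℝ,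
    (∀ q : ℕ, J q ⊆ TScale θ) ∧ (∀ q : ℕ, (J q).OrdConnected) ∧
    (∀ q : ℕ, ε₁ ≤ Metric.diam (J q)) ∧
    Pairwise (Function.onFun Disjoint J) ∧
    ∀ q : ℕ, ∀ t ∈ J q, ε₀ < ‖x t - x' t‖

/-!
On each interval `(s_{k-1}, s_k]` the substitution `ψ⁻¹` is the translation by
`signedSum (tdelta θ) k`, that is by `δ_0 + ⋯ + δ_{k-1}` (by `-(δ_k + ⋯ + δ_{-1})` when `k < 0`),
and it carries that interval onto `(θ_{2k-1}, θ_{2k}]`. So the differential equations of the two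
systems correspond piece by piece: the only point lost is the left endpoint `θ_{2k-1}`, where the
derivative is recovered as the limit of the (continuous) right-hand side. The right limit of `y`
at `s_k` is `x(θ_{2k+1})`, so the jump condition is the difference relation rewritten. Finally
`s_k - s_{k-1} = θ_{2k} - θ_{2k-1}`, and the divergence of these sums in both directions puts
every real number in some `(s_{k-1}, s_k]`, which gives the left continuity of `y`.
-/

open Set

def signedSum (D : ℤ → ℝ) (k : ℤ) : ℝ :=
  ∑ ν ∈ Finset.Ico 0 k, D ν - ∑ ν ∈ Finset.Ico k 0, D ν

lemma signedSum_zero (D : ℤ → ℝ) : signedSum D 0 = 0 := by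
  simp [signedSum]

lemma signedSum_add_one (D : ℤ → ℝ) (k : ℤ) : signedSum D (k + 1) = signedSum D k + D k := by
  rcases le_or_gt 0 k with hk | hk
  · rw [signedSum, signedSum, ← Finset.insert_Ico_right_eq_Ico_add_one hk,
      Finset.sum_insert (by simp), Finset.Ico_eq_empty_of_le (by omega : 0 ≤ k + 1),
      Finset.Ico_eq_empty_of_le hk]
    ring
  · rw [signedSum, signedSum, ← Finset.insert_Ico_add_one_left_eq_Ico hk,
      Finset.sum_insert (by simp), Finset.Ico_eq_empty_of_le (by omega : k + 1 ≤ 0),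
      Finset.Ico_eq_empty_of_le hk.le]
    ring

def nodeSum (g D : ℤ → ℝ) (t : ℝ) : ℝ :=
  if 0 ≤ t then ∑' ν, (if 0 < g ν ∧ g ν < t then D ν else 0)
  else -∑' ν, (if t ≤ g ν ∧ g ν < 0 then D ν else 0)

lemma psi_eq_sub_nodeSum (θ : ℤ → ℝ) (t : ℝ) :
    psi θ t = t - nodeSum (fun ν => θ (2 * ν)) (tdelta θ) t := by
  unfold psi nodeSum
  split_ifs <;> ring

lemma psiInv_eq_add_nodeSum (θ : ℤ → ℝ) (s : ℝ) :
    psiInv θ s = s + nodeSum (sk θ) (tdelta θ) s := by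
  unfold psiInv nodeSum
  split_ifs <;> ring

lemma Monotone.lt_iff_lt_of_mem_Ioc {g : ℤ → ℝ} (hg : Monotone g) {k : ℤ} {t : ℝ}
    (ht : t ∈ Ioc (g (k - 1)) (g k)) (ν : ℤ) : g ν < t ↔ ν < k :=
  ⟨fun h => not_le.1 fun hν => (ht.2.trans (hg hν)).not_gt h,
    fun hν => (hg (by omega : ν ≤ k - 1)).trans_lt ht.1⟩

lemma tsum_ite_eq_sum {P : ℤ → Prop} [DecidablePred P] {s : Finset ℤ} (h : ∀ ν, P ν ↔ ν ∈ s)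
    (D : ℤ → ℝ) : ∑' ν, (if P ν then D ν else 0) = ∑ ν ∈ s, D ν := by
  rw [sum_eq_tsum_indicator]
  congr with ν
  simp [Set.indicator, h]

lemma nodeSum_eq_signedSum {g : ℤ → ℝ} (hg : Monotone g) (h0 : 0 ∈ Ioo (g (-1)) (g 0))
    (D : ℤ → ℝ) {k : ℤ} {t : ℝ} (ht : t ∈ Ioc (g (k - 1)) (g k)) :
    nodeSum g D t = signedSum D k := by
  have hlt := hg.lt_iff_lt_of_mem_Ioc ht
  have hle : ∀ ν, t ≤ g ν ↔ k ≤ ν := fun ν => by rw [← not_lt, hlt, not_lt]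
  have hneg : ∀ ν, g ν < 0 ↔ ν < 0 :=
    hg.lt_iff_lt_of_mem_Ioc (k := 0) ⟨by simpa using h0.1, h0.2.le⟩
  have hpos : ∀ ν, 0 < g ν ↔ 0 ≤ ν := fun ν =>
    ⟨fun h => not_lt.1 fun hν => ((hneg ν).2 hν).not_gt h, fun h => h0.2.trans_le (hg h)⟩
  unfold nodeSum signedSum
  split_ifs with h
  · have hk : 0 ≤ k := not_lt.1 fun hk => ((hneg k).2 hk).not_ge (h.trans ht.2)
    rw [tsum_ite_eq_sum (s := Finset.Ico 0 k) (by simp [hpos, hlt]),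
      Finset.Ico_eq_empty_of_le hk, Finset.sum_empty, sub_zero]
  · have hk : k ≤ 0 := not_lt.1 fun hk => h (h0.2.le.trans ((hg (by omega)).trans ht.1.le))
    rw [tsum_ite_eq_sum (s := Finset.Ico k 0) (by simp [hle, hneg]),
      Finset.Ico_eq_empty_of_le hk, Finset.sum_empty, zero_sub]

section PsiSubstitution

variable {θ : ℤ → ℝ}

lemma sk_eq_sub_signedSum (hθ : StrictMono θ) (h0 : 0 ∈ Ioo (θ (-1)) (θ 0)) (k : ℤ) :
    sk θ k = θ (2 * k) - signedSum (tdelta θ) k := by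
  rw [sk, psi_eq_sub_nodeSum, nodeSum_eq_signedSum (fun _ _ h => hθ.monotone (by omega))
    ⟨(hθ (by norm_num : (2 * -1 : ℤ) < -1)).trans h0.1, by simpa using h0.2⟩ _
    ⟨hθ (by omega), le_rfl⟩]

lemma theta_two_mul_eq (hθ : StrictMono θ) (h0 : 0 ∈ Ioo (θ (-1)) (θ 0)) (k : ℤ) :
    θ (2 * k) = sk θ k + signedSum (tdelta θ) k := by
  rw [sk_eq_sub_signedSum hθ h0]
  ring

lemma theta_two_mul_sub_one_eq (hθ : StrictMono θ) (h0 : 0 ∈ Ioo (θ (-1)) (θ 0)) (k : ℤ) :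
    θ (2 * k - 1) = sk θ (k - 1) + signedSum (tdelta θ) k := by
  have h := signedSum_add_one (tdelta θ) (k - 1)
  rw [sub_add_cancel] at h
  rw [sk_eq_sub_signedSum hθ h0, h, tdelta, show 2 * (k - 1) + 1 = 2 * k - 1 by ring]
  ring

lemma sk_sub_sk_sub_one (hθ : StrictMono θ) (h0 : 0 ∈ Ioo (θ (-1)) (θ 0)) (k : ℤ) :
    sk θ k - sk θ (k - 1) = θ (2 * k) - θ (2 * k - 1) := by
  rw [theta_two_mul_eq hθ h0, theta_two_mul_sub_one_eq hθ h0]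
  ring

lemma sk_strictMono (hθ : StrictMono θ) (h0 : 0 ∈ Ioo (θ (-1)) (θ 0)) : StrictMono (sk θ) := by
  refine strictMono_int_of_lt_succ fun k => ?_
  have h := sk_sub_sk_sub_one hθ h0 (k + 1)
  rw [add_sub_cancel_right] at h
  linarith [hθ (by omega : 2 * (k + 1) - 1 < 2 * (k + 1))]

lemma sk_neg_one (hθ : StrictMono θ) (h0 : 0 ∈ Ioo (θ (-1)) (θ 0)) : sk θ (-1) = θ (-1) := by
  simpa [signedSum_zero] using (theta_two_mul_sub_one_eq hθ h0 0).symm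

lemma sk_zero (hθ : StrictMono θ) (h0 : 0 ∈ Ioo (θ (-1)) (θ 0)) : sk θ 0 = θ 0 := by
  simpa [signedSum_zero] using (theta_two_mul_eq hθ h0 0).symm

lemma eqOn_psiInv_add_signedSum (hθ : StrictMono θ) (h0 : 0 ∈ Ioo (θ (-1)) (θ 0)) (k : ℤ) :
    EqOn (psiInv θ) (· + signedSum (tdelta θ) k) (Ioc (sk θ (k - 1)) (sk θ k)) := fun s hs => by
  rw [psiInv_eq_add_nodeSum, nodeSum_eq_signedSum (sk_strictMono hθ h0).monotone
    (by rw [sk_neg_one hθ h0, sk_zero hθ h0]; exact h0) _ hs]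

lemma psiInv_sk (hθ : StrictMono θ) (h0 : 0 ∈ Ioo (θ (-1)) (θ 0)) (k : ℤ) :
    psiInv θ (sk θ k) = θ (2 * k) := by
  rw [eqOn_psiInv_add_signedSum hθ h0 k ⟨sk_strictMono hθ h0 (sub_one_lt k), le_rfl⟩]
  exact (theta_two_mul_eq hθ h0 k).symm

lemma Monotone.exists_mem_Ioc {u : ℤ → ℝ} (hu : Monotone u) {s : ℝ} (hlo : ∃ a, u a < s)
    (hhi : ∃ b, s ≤ u b) : ∃ k, s ∈ Ioc (u (k - 1)) (u k) := by
  classical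
  obtain ⟨a, ha⟩ := hlo
  obtain ⟨k, hk, hmin⟩ := Int.exists_least_of_bdd (P := fun z => s ≤ u z)
    ⟨a, fun z hz => not_lt.1 fun hza => ((hu hza.le).trans_lt ha).not_ge hz⟩ hhi
  exact ⟨k, not_le.1 fun h => (hmin _ h).not_gt (by omega), hk⟩

lemma exists_sk_mem_Ioc {ω : ℝ} {p : ℕ} (hts : TimeScaleHyp θ ω p) (s : ℝ) :
    ∃ k, s ∈ Ioc (sk θ (k - 1)) (sk θ k) := by
  have h0 : 0 ∈ Ioo (θ (-1)) (θ 0) := ⟨hts.theta_neg, hts.theta_pos⟩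
  have hgap := sk_sub_sk_sub_one hts.mono h0
  have hup : ∀ N : ℕ, sk θ (N - 1) =
      sk θ (-1) + ∑ k ∈ Finset.range N, (θ (2 * (k : ℤ)) - θ (2 * (k : ℤ) - 1)) := by
    intro N
    induction N with
    | zero => simp
    | succ N ih =>
      rw [Finset.sum_range_succ, ← add_assoc, ← ih, ← hgap]
      push_cast
      ring_nf
  have hdown : ∀ N : ℕ, sk θ (-N) =
      sk θ 0 - ∑ k ∈ Finset.range N, (θ (2 * (-(k : ℤ))) - θ (2 * (-(k : ℤ)) - 1)) := by
    intro N
    induction N with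
    | zero => simp
    | succ N ih =>
      rw [Finset.sum_range_succ, sub_add_eq_sub_sub, ← ih, ← hgap]
      push_cast
      ring_nf
  have htop : Tendsto (fun N : ℕ => sk θ (N - 1)) atTop atTop := by
    simpa only [hup] using tendsto_atTop_add_const_left _ _ hts.sum_top
  have hbot : Tendsto (fun N : ℕ => sk θ (-N)) atTop atBot := by
    simpa only [hdown, sub_eq_add_neg, Function.comp_def] using
      tendsto_atBot_add_const_left _ _ (tendsto_neg_atTop_atBot.comp hts.sum_bot)
  obtain ⟨N, hN⟩ := (htop.eventually_ge_atTop s).exists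
  obtain ⟨M, hM⟩ := (hbot.eventually_lt_atBot s).exists
  exact (sk_strictMono hts.mono h0).monotone.exists_mem_Ioc ⟨_, hM⟩ ⟨_, hN⟩

end PsiSubstitution

section Translation

variable {E : Type*} [NormedAddCommGroup E] [NormedSpace ℝ E]

lemma forall_hasDerivWithinAt_Icc_iff_Ioc {F g : ℝ → E} {a b : ℝ} (hab : a < b)
    (hF : ContinuousWithinAt F (Icc a b) a) (hg : ContinuousWithinAt g (Icc a b) a) :
    (∀ t ∈ Icc a b, HasDerivWithinAt F (g t) (Icc a b) t) ↔
      ∀ t ∈ Ioc a b, HasDerivWithinAt F (g t) (Ioc a b) t := by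
  refine ⟨fun h t ht => (h t (Ioc_subset_Icc_self ht)).mono Ioc_subset_Icc_self, fun h t ht => ?_⟩
  rcases eq_or_lt_of_le ht.1 with rfl | hat
  · have hderiv : ∀ u ∈ Ioo a b, HasDerivAt F (g u) u := fun u hu =>
      (h u (Ioo_subset_Ioc_self hu)).hasDerivAt (Ioc_mem_nhds hu.1 hu.2)
    have hlim : Tendsto (deriv F) (𝓝[>] a) (𝓝 (g a)) := by
      refine (hg.tendsto.mono_left (nhdsWithin_le_iff.2 (Icc_mem_nhdsGT hab))).congr' ?_
      filter_upwards [Ioo_mem_nhdsGT hab] with u hu using (hderiv u hu).deriv.symm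
    exact (hasDerivWithinAt_Ici_of_tendsto_deriv
      (fun u hu => (hderiv u hu).differentiableAt.differentiableWithinAt)
      (hF.mono Ioo_subset_Icc_self) (Ioo_mem_nhdsGT hab) hlim).mono Icc_subset_Ici_self
  · exact (h t ⟨hat, ht.2⟩).mono_of_mem_nhdsWithin
      (mem_nhdsWithin.2 ⟨Ioi a, isOpen_Ioi, hat, fun u hu => ⟨hu.1, hu.2.2⟩⟩)

lemma forall_hasDerivWithinAt_comp_iff_of_eqOn_add {F g : ℝ → E} {φ : ℝ → ℝ} {a b c : ℝ}
    (hφ : EqOn φ (· + c) (Ioc a b)) :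
    (∀ s ∈ Ioc a b, HasDerivWithinAt (F ∘ φ) (g (φ s)) (Ioc a b) s) ↔
      ∀ t ∈ Ioc (a + c) (b + c), HasDerivWithinAt F (g t) (Ioc (a + c) (b + c)) t := by
  have key : ∀ s ∈ Ioc a b, HasDerivWithinAt (F ∘ φ) (g (φ s)) (Ioc a b) s ↔
      HasDerivWithinAt F (g (s + c)) (Ioc (a + c) (b + c)) (s + c) := fun s hs => by
    have hEq : F ∘ φ =ᶠ[𝓝[Ioc a b] s] fun τ => F (τ + c) :=
      eventually_nhdsWithin_of_forall fun τ hτ => congrArg F (hφ hτ)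
    rw [hφ hs, hEq.hasDerivWithinAt_iff_of_mem hs, hasDerivWithinAt_iff_hasFDerivWithinAt,
      hasFDerivWithinAt_comp_add_right, ← hasDerivWithinAt_iff_hasFDerivWithinAt]
    simp only [← Set.image_vadd, vadd_eq_add, add_comm c, Set.image_add_const_Ioc]
  refine ⟨fun h t ht => ?_, fun h s hs =>
    (key s hs).2 (h _ ⟨by linarith [hs.1], by linarith [hs.2]⟩)⟩
  have hs : t - c ∈ Ioc a b := ⟨by linarith [ht.1], by linarith [ht.2]⟩
  simpa using (key _ hs).1 (h _ hs)

variable {X : Type*} [TopologicalSpace X]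

lemma continuousWithinAt_Iic_comp_of_eqOn_add {F : ℝ → X} {φ : ℝ → ℝ} {a b c s : ℝ}
    (hφ : EqOn φ (· + c) (Ioc a b)) (hs : s ∈ Ioc a b)
    (hF : ContinuousWithinAt F (Icc (a + c) (b + c)) (s + c)) :
    ContinuousWithinAt (F ∘ φ) (Iic s) s := by
  have hshift : ContinuousWithinAt (fun τ => F (τ + c)) (Ioc a s) s :=
    hF.comp (f := (· + c)) (continuous_add_const c).continuousWithinAt
      fun τ hτ => ⟨by linarith [hτ.1], by linarith [hτ.2, hs.2]⟩
  exact (hshift.congr (fun τ hτ => congrArg F (hφ ⟨hτ.1, hτ.2.trans hs.2⟩))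
    (congrArg F (hφ hs))).mono_of_mem_nhdsWithin (Ioc_mem_nhdsLE hs.1)

lemma tendsto_nhdsGT_comp_of_eqOn_add {F : ℝ → X} {φ : ℝ → ℝ} {a b c : ℝ}
    (hφ : EqOn φ (· + c) (Ioc a b)) (hab : a < b)
    (hF : ContinuousWithinAt F (Icc (a + c) (b + c)) (a + c)) :
    Tendsto (F ∘ φ) (𝓝[>] a) (𝓝 (F (a + c))) := by
  have hshift : ContinuousWithinAt (fun τ => F (τ + c)) (Ioc a b) a :=
    hF.comp (f := (· + c)) (continuous_add_const c).continuousWithinAt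
      fun τ hτ => ⟨by linarith [hτ.1], by linarith [hτ.2]⟩
  exact (hshift.tendsto.congr' (eventually_nhdsWithin_of_forall fun τ hτ =>
    (congrArg F (hφ hτ)).symm)).mono_left (nhdsWithin_le_iff.2 (Ioc_mem_nhdsGT hab))

end Translation

lemma continuousOn_interSum {m n : ℕ} (r : ℕ) (C : Fin m → Fin n → Fin m → Fin n → ℝ)
    {f : ℝ → ℝ} (hf : Continuous f) {x : ℝ → Fin m → Fin n → ℝ} {S : Set ℝ}
    (hx : ContinuousOn x S) (i : Fin m) (j : Fin n) :
    ContinuousOn (fun t => interSum r C f (x t) i j) S := by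
  have hxij : ∀ i j, ContinuousOn (fun t => x t i j) S := fun i j =>
    continuousOn_pi.1 (continuousOn_pi.1 hx i) j
  exact continuousOn_finsetSum _ fun q _ =>
    (continuousOn_const.mul (hf.comp_continuousOn (hxij q.1 q.2))).mul (hxij i j)

section SolutionCorrespondence

variable {θ : ℤ → ℝ}

lemma forall_hasDerivWithinAt_Icc_iff_comp_psiInv (hθ : StrictMono θ)
    (h0 : 0 ∈ Ioo (θ (-1)) (θ 0)) {m n : ℕ} (r : ℕ) (a : Fin m → Fin n → ℝ)
    (C : Fin m → Fin n → Fin m → Fin n → ℝ) {f : ℝ → ℝ} (hf : Continuous f)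
    {L : ℝ → Fin m → Fin n → ℝ} {ζ : ℤ → Fin m → Fin n → ℝ} {x : ℝ → Fin m → Fin n → ℝ}
    (k : ℤ) (hL : ∀ t ∈ Icc (θ (2 * k - 1)) (θ (2 * k)), ∀ i j, L t i j = ζ k i j)
    (hx : ContinuousOn x (Icc (θ (2 * k - 1)) (θ (2 * k)))) :
    (∀ t ∈ Icc (θ (2 * k - 1)) (θ (2 * k)), ∀ i j,
      HasDerivWithinAt (fun τ => x τ i j)
        (-(a i j) * x t i j - interSum r C f (x t) i j + L t i j)
        (Icc (θ (2 * k - 1)) (θ (2 * k))) t) ↔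
    ∀ s ∈ Ioc (sk θ (k - 1)) (sk θ k), ∀ i j,
      HasDerivWithinAt (fun τ => x (psiInv θ τ) i j)
        (-(a i j) * x (psiInv θ s) i j - interSum r C f (x (psiInv θ s)) i j +
          L (psiInv θ s) i j)
        (Ioc (sk θ (k - 1)) (sk θ k)) s := by
  have hlt : θ (2 * k - 1) < θ (2 * k) := hθ (by omega)
  have hmem : θ (2 * k - 1) ∈ Icc (θ (2 * k - 1)) (θ (2 * k)) := left_mem_Icc.2 hlt.le
  have hIoc : Ioc (sk θ (k - 1) + signedSum (tdelta θ) k) (sk θ k + signedSum (tdelta θ) k) =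
      Ioc (θ (2 * k - 1)) (θ (2 * k)) := by
    rw [theta_two_mul_sub_one_eq hθ h0, theta_two_mul_eq hθ h0]
  have key : ∀ i j,
      (∀ t ∈ Icc (θ (2 * k - 1)) (θ (2 * k)), HasDerivWithinAt (fun τ => x τ i j)
        (-(a i j) * x t i j - interSum r C f (x t) i j + L t i j)
        (Icc (θ (2 * k - 1)) (θ (2 * k))) t) ↔
      ∀ s ∈ Ioc (sk θ (k - 1)) (sk θ k), HasDerivWithinAt (fun τ => x (psiInv θ τ) i j)
        (-(a i j) * x (psiInv θ s) i j - interSum r C f (x (psiInv θ s)) i j +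
          L (psiInv θ s) i j)
        (Ioc (sk θ (k - 1)) (sk θ k)) s := fun i j => by
    have hxij : ContinuousOn (fun t => x t i j) (Icc (θ (2 * k - 1)) (θ (2 * k))) :=
      continuousOn_pi.1 (continuousOn_pi.1 hx i) j
    -- on the closed piece the input `L` is the constant `ζ k`
    have hrhs : ContinuousOn (fun t => -(a i j) * x t i j - interSum r C f (x t) i j + ζ k i j)
        (Icc (θ (2 * k - 1)) (θ (2 * k))) :=
      ((continuousOn_const.mul hxij).sub (continuousOn_interSum r C hf hx i j)).add
        continuousOn_const
    rw [forall_hasDerivWithinAt_Icc_iff_Ioc hlt (hxij _ hmem)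
      ((hrhs _ hmem).congr (fun t ht => by rw [hL t ht i j]) (by rw [hL _ hmem i j])), ← hIoc]
    exact (forall_hasDerivWithinAt_comp_iff_of_eqOn_add (F := fun τ => x τ i j)
      (eqOn_psiInv_add_signedSum hθ h0 k)).symm
  exact ⟨fun h s hs i j => (key i j).1 (fun t ht => h t ht i j) s hs,
    fun h t ht i j => (key i j).2 (fun s hs => h s hs i j) t ht⟩

variable {X : Type*} [TopologicalSpace X] {x : ℝ → X}

lemma tendsto_comp_psiInv_nhdsGT_sk (hθ : StrictMono θ) (h0 : 0 ∈ Ioo (θ (-1)) (θ 0)) (k : ℤ)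
    (hx : ContinuousOn x (Icc (θ (2 * (k + 1) - 1)) (θ (2 * (k + 1))))) :
    Tendsto (fun s => x (psiInv θ s)) (𝓝[>] (sk θ k)) (𝓝 (x (θ (2 * k + 1)))) := by
  have hφ := eqOn_psiInv_add_signedSum hθ h0 (k + 1)
  have hodd := theta_two_mul_sub_one_eq hθ h0 (k + 1)
  have hlt : sk θ k < sk θ (k + 1) := sk_strictMono hθ h0 (lt_add_one k)
  rw [add_sub_cancel_right] at hφ hodd
  rw [hodd, theta_two_mul_eq hθ h0] at hx
  rw [show 2 * k + 1 = 2 * (k + 1) - 1 by ring, hodd]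
  exact tendsto_nhdsGT_comp_of_eqOn_add hφ hlt
    (hx.continuousWithinAt (left_mem_Icc.2 (by linarith)))

lemma continuousWithinAt_Iic_comp_psiInv {ω : ℝ} {p : ℕ} (hts : TimeScaleHyp θ ω p)
    (hx : ∀ k : ℤ, ContinuousOn x (Icc (θ (2 * k - 1)) (θ (2 * k)))) (s : ℝ) :
    ContinuousWithinAt (fun τ => x (psiInv θ τ)) (Iic s) s := by
  have h0 : 0 ∈ Ioo (θ (-1)) (θ 0) := ⟨hts.theta_neg, hts.theta_pos⟩
  obtain ⟨k, hk⟩ := exists_sk_mem_Ioc hts s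
  have hxk := hx k
  rw [theta_two_mul_sub_one_eq hts.mono h0, theta_two_mul_eq hts.mono h0] at hxk
  exact continuousWithinAt_Iic_comp_of_eqOn_add (eqOn_psiInv_add_signedSum hts.mono h0 k) hk
    (hxk.continuousWithinAt ⟨by linarith [hk.1], by linarith [hk.2]⟩)

end SolutionCorrespondence

theorem isSICNNSol_iff_isImpSol_comp_psiInv_general
    (θ : ℤ → ℝ) (ω : ℝ) (p : ℕ) (hts : TimeScaleHyp θ ω p) 
    (m n r : ℕ) (a : Fin m → Fin n → ℝ)
    (C : Fin m → Fin n → Fin m → Fin n → ℝ)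
    (f : ℝ → ℝ) (hf : Continuous f)
    (ζ : ℤ → Fin m → Fin n → ℝ)
    (L : ℝ → Fin m → Fin n → ℝ)
    (hL : ∀ k : ℤ, ∀ t ∈ Set.Icc (θ (2 * k - 1)) (θ (2 * k)), ∀ i j, L t i j = ζ k i j)
    (x : ℝ → Fin m → Fin n → ℝ)
    (hx : ∀ k : ℤ, ContinuousOn x (Set.Icc (θ (2 * k - 1)) (θ (2 * k)))) :
    IsSICNNSol θ r a C f L ζ x ↔
      IsImpSol θ r a C f L ζ (fun s => x (psiInv θ s)) := by
  have h0 : 0 ∈ Ioo (θ (-1)) (θ 0) := ⟨hts.theta_neg, hts.theta_pos⟩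
  have hderiv k :=
    forall_hasDerivWithinAt_Icc_iff_comp_psiInv hts.mono h0 r a C hf k (hL k) (hx k)
  have hleft s i j : ContinuousWithinAt (fun τ => x (psiInv θ τ) i j) (Iic s) s :=
    continuousWithinAt_pi.1
      (continuousWithinAt_pi.1 (continuousWithinAt_Iic_comp_psiInv hts hx s) i) j
  have hjump k i j :
      x (θ (2 * k + 1)) i j = (1 - tdelta θ k * a i j) * x (θ (2 * k)) i j
          - tdelta θ k * interSum r C f (x (θ (2 * k))) i j + tdelta θ k * ζ k i j ↔
        Tendsto (fun τ => x (psiInv θ τ) i j) (𝓝[>] (sk θ k))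
          (𝓝 (x (psiInv θ (sk θ k)) i j + (-(tdelta θ k) * a i j * x (psiInv θ (sk θ k)) i j
            - tdelta θ k * interSum r C f (x (psiInv θ (sk θ k))) i j
            + tdelta θ k * ζ k i j))) := by
    have hlim := tendsto_pi_nhds.1
      (tendsto_pi_nhds.1 (tendsto_comp_psiInv_nhdsGT_sk hts.mono h0 k (hx (k + 1))) i) j
    rw [psiInv_sk hts.mono h0 k]
    refine ⟨fun h => ?_, fun h => ?_⟩
    · convert hlim using 2
      rw [h]
      ring
    · rw [tendsto_nhds_unique hlim h]
      ring
  exact ⟨fun h => ⟨fun k => (hderiv k).1 (h.1 k), hleft, fun k i j => (hjump k i j).1 (h.2 k i j)⟩,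
    fun h => ⟨fun k => (hderiv k).2 (h.1 k), fun k i j => (hjump k i j).2 (h.2.2 k i j)⟩⟩

/-- A (rd-continuous) function `x` on `𝕋₀` is a solution of the SICNN on
the time scale if and only if `y(s) = x(ψ⁻¹(s))` is a solution of the associated impulsive
system on `ℝ`. -/
theorem isSICNNSol_iff_isImpSol_comp_psiInv
    (θ : ℤ → ℝ) (ω : ℝ) (p : ℕ) (hts : TimeScaleHyp θ ω p) 
    (m n r : ℕ) (a : Fin m → Fin n → ℝ) (ha : ∀ i j, 0 < a i j)
    (C : Fin m → Fin n → Fin m → Fin n → ℝ) (hCpos : ∀ i j i' j', 0 ≤ C i j i' j')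
    (f : ℝ → ℝ) (hf : Continuous f)
    (ζ : ℤ → Fin m → Fin n → ℝ)
    (L : ℝ → Fin m → Fin n → ℝ)
    (hL : ∀ k : ℤ, ∀ t ∈ Set.Icc (θ (2 * k - 1)) (θ (2 * k)), ∀ i j, L t i j = ζ k i j)
    (x : ℝ → Fin m → Fin n → ℝ)
    (hx : ∀ k : ℤ, ContinuousOn x (Set.Icc (θ (2 * k - 1)) (θ (2 * k)))) :
    IsSICNNSol θ r a C f L ζ x ↔
      IsImpSol θ r a C f L ζ (fun s => x (psiInv θ s)) :=
  isSICNNSol_iff_isImpSol_comp_psiInv_general θ ω p hts m n r a C f hf ζ L hL x hx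
end
end

section
/- Let d̄ > 0 and δ > 0, and let α = λ − d̄ − (p/ψ(ω)) ln(1 + δd̄). Then for any real numbers a₀ < b₀, (1 + δd̄)^{i((a₀,b₀))} e^{d̄(b₀−a₀)} ≤ (1 + δd̄)^p e^{(λ−α)(b₀−a₀)}, where i((a₀,b₀)) denotes the number of terms of the sequence {s_k}_{k∈ℤ} lying in the interval (a₀, b₀). -/
open Filter Topology MeasureTheory

noncomputable section

/-! Each block of `p` consecutive points `s_k` advances by `ψ(ω)`, so an interval of length `L`
contains at most `p ⌈L / ψ(ω)⌉ ≤ p + p L / ψ(ω)` of them. Raising `1 + δd̄` to this count is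
exactly what the term `(p / ψ(ω)) ln(1 + δd̄)` of `λ - α` absorbs. -/

theorem Set.ncard_le_of_forall_sub_lt {S : Set ℤ} {m : ℕ} (h : ∀ i ∈ S, ∀ j ∈ S, j - i < m) :
    S.ncard ≤ m := by
  rcases S.finite_or_infinite with hfin | hinf
  · rcases S.eq_empty_or_nonempty with rfl | hne
    · simp
    obtain ⟨i₀, hi₀, hmin⟩ := S.exists_min_image id hfin hne
    have hsub : S ⊆ Finset.Ico i₀ (i₀ + m) := fun j hj =>
      by simpa using ⟨hmin j hj, by linarith [h i₀ hi₀ j hj]⟩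
    calc S.ncard ≤ (Finset.Ico i₀ (i₀ + m) : Set ℤ).ncard := Set.ncard_le_ncard hsub
      _ = m := by rw [Set.ncard_coe_finset, Int.card_Ico]; omega
  · simp [hinf.ncard]

section ShiftEquivariant

variable {f : ℤ → ℝ} {p : ℕ} {P : ℝ}

theorem apply_add_nat_mul_of_apply_add (h : ∀ k, f (k + p) = f k + P) (k : ℤ) (n : ℕ) :
    f (k + n * p) = f k + n * P := by
  induction n with
  | zero => simp
  | succ n ih =>
    rw [show k + ((n + 1 : ℕ) : ℤ) * p = k + n * p + p by push_cast; ring, h, ih]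
    push_cast
    ring

theorem ncard_preimage_Ioo_le_ceil (hf : Monotone f) (h : ∀ k, f (k + p) = f k + P)
    (hP : 0 < P) (a b : ℝ) :
    {k : ℤ | f k ∈ Set.Ioo a b}.ncard ≤ p * ⌈(b - a) / P⌉₊ := by
  refine Set.ncard_le_of_forall_sub_lt fun i hi j hj => ?_
  by_contra! hle
  have hL : b - a ≤ ⌈(b - a) / P⌉₊ * P := (div_le_iff₀ hP).1 (Nat.le_ceil _)
  have := hf (show i + (⌈(b - a) / P⌉₊ : ℕ) * (p : ℤ) ≤ j by push_cast at hle ⊢; linarith)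
  rw [apply_add_nat_mul_of_apply_add h] at this
  linarith [hi.1, hj.2]

theorem ncard_preimage_Ioo_le (hf : Monotone f) (h : ∀ k, f (k + p) = f k + P)
    (hP : 0 < P) {a b : ℝ} (hab : a ≤ b) :
    ({k : ℤ | f k ∈ Set.Ioo a b}.ncard : ℝ) ≤ p + p / P * (b - a) := by
  have hceil : (⌈(b - a) / P⌉₊ : ℝ) < (b - a) / P + 1 :=
    Nat.ceil_lt_add_one (div_nonneg (sub_nonneg.2 hab) hP.le)
  calc ({k : ℤ | f k ∈ Set.Ioo a b}.ncard : ℝ) ≤ (p * ⌈(b - a) / P⌉₊ : ℕ) := by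
        exact_mod_cast ncard_preimage_Ioo_le_ceil hf h hP a b
    _ ≤ p * ((b - a) / P + 1) := by push_cast; gcongr
    _ = p + p / P * (b - a) := by ring

end ShiftEquivariant

theorem pow_le_pow_mul_exp_of_le {q : ℝ} (hq : 1 ≤ q) {N p : ℕ} {c : ℝ} (hN : (N : ℝ) ≤ p + c) :
    q ^ N ≤ q ^ p * Real.exp (c * Real.log q) := by
  have hq₀ : 0 < q := by linarith
  calc q ^ N = q ^ (N : ℝ) := (Real.rpow_natCast q N).symm
    _ ≤ q ^ ((p : ℝ) + c) := Real.rpow_le_rpow_of_exponent_le hq hN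
    _ = q ^ p * Real.exp (c * Real.log q) := by
      rw [Real.rpow_add hq₀, Real.rpow_natCast, Real.rpow_def_of_pos hq₀, mul_comm (Real.log q)]

theorem pow_count_mul_exp_le_general
    (θ : ℤ → ℝ) (ω : ℝ) (p : ℕ) (hts : TimeScaleHyp θ ω p)
    (hmono : StrictMono (sk θ))
    (hper : ∀ k : ℤ, sk θ (k + (p : ℤ)) = sk θ k + psi θ ω)
    (lam db dl : ℝ) (hdb : 0 < db) (hdl : 0 < dl)
    (α : ℝ) (hα : α = lam - db - (p : ℝ) / psi θ ω * Real.log (1 + dl * db))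
    (a₀ b₀ : ℝ) (hab : a₀ < b₀) :
    (1 + dl * db) ^ {k : ℤ | sk θ k ∈ Set.Ioo a₀ b₀}.ncard * Real.exp (db * (b₀ - a₀)) ≤
      (1 + dl * db) ^ p * Real.exp ((lam - α) * (b₀ - a₀)) := by
  have hψω : 0 < psi θ ω := by
    have := hmono (lt_add_of_pos_right (0 : ℤ) (by exact_mod_cast hts.p_pos : (0 : ℤ) < p))
    linarith [hper 0]
  have hcount := ncard_preimage_Ioo_le hmono.monotone hper hψω hab.le
  have hq : 1 ≤ 1 + dl * db := le_add_of_nonneg_right (mul_pos hdl hdb).le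
  calc _ ≤ (1 + dl * db) ^ p * Real.exp (p / psi θ ω * (b₀ - a₀) * Real.log (1 + dl * db)) *
          Real.exp (db * (b₀ - a₀)) := by
        gcongr
        exact pow_le_pow_mul_exp_of_le hq hcount
    _ = _ := by
      rw [mul_assoc, ← Real.exp_add, hα]
      ring_nf

/-- With `α = λ - d̄ - (p/ψ(ω)) ln(1+δd̄)`, for any reals `a₀ < b₀`,
`(1+δd̄)^{i((a₀,b₀))} e^{d̄(b₀-a₀)} ≤ (1+δd̄)^p e^{(λ-α)(b₀-a₀)}`. -/
theorem pow_count_mul_exp_le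
    (θ : ℤ → ℝ) (ω : ℝ) (p : ℕ) (hts : TimeScaleHyp θ ω p)
    (hmono : StrictMono (sk θ))
    (hper : ∀ k : ℤ, sk θ (k + (p : ℤ)) = sk θ k + psi θ ω)
    (lam db dl : ℝ) (hlam : 0 < lam) (hdb : 0 < db) (hdl : 0 < dl)
    (α : ℝ) (hα : α = lam - db - (p : ℝ) / psi θ ω * Real.log (1 + dl * db))
    (a₀ b₀ : ℝ) (hab : a₀ < b₀) :
    (1 + dl * db) ^ {k : ℤ | sk θ k ∈ Set.Ioo a₀ b₀}.ncard * Real.exp (db * (b₀ - a₀)) ≤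
      (1 + dl * db) ^ p * Real.exp ((lam - α) * (b₀ - a₀)) :=
  pow_count_mul_exp_le_general θ ω p hts hmono hper lam db dl hdb hdl α hα a₀ b₀ hab
end
end

section
/- Under conditions (C1)–(C5), if a pair of sequences ζ, ζ̃ (each satisfying ζ_{k+1} = F(ζ_k), ζ̃_{k+1} = F(ζ̃_k)) is frequently separated, i.e., limsup_{k→∞} ‖ζ_k − ζ̃_k‖ > 0, then the pair of bounded solutions φ_ζ(t), φ_ζ̃(t) of the SICNN is frequently (ε₀, ε₁)-separated for some positive numbers ε₀ and ε₁: there exist infinitely many disjoint intervals J_q ⊂ 𝕋₀, q ∈ ℕ, each of length no less than ε₁, such that ‖φ_ζ(t) − φ_ζ̃(t)‖ > ε₀ for each t from these intervals. -/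
/-!
If the inputs differ, `‖ζ_k - ζ̃_k‖ ≥ c`, on a component `[θ_{2k-1}, θ_{2k}]` of length at
least `η`, the difference `z = φ_ζ - φ_ζ̃` cannot stay small on it: while `‖z‖ < ε` its
derivative stays within `O(ε)` of `ζ_k - ζ̃_k`, so `z` would travel a distance of order `c η`.
Hence `‖z‖` reaches `2 ε₀` on the component, and since `z'` is uniformly bounded, `‖z‖ > ε₀` on
a subinterval of fixed length `ε₁`. Such components occur infinitely often: by the `ω`-property
and the periodicity of `δ_k`, components of length at least `θ_0 - θ_{-1}` recur with bounded
gaps `N`, and by uniform continuity of `F` on the compact set `Λ`, a separation of `ζ_k, ζ̃_k`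
persists, with a smaller constant, for `N` steps backwards.
-/

open Filter Topology MeasureTheory

noncomputable section

open Function Set

lemma Icc_subset_TScale (θ : ℤ → ℝ) (k : ℤ) : Icc (θ (2 * k - 1)) (θ (2 * k)) ⊆ TScale θ :=
  subset_iUnion (fun k : ℤ => Icc (θ (2 * k - 1)) (θ (2 * k))) k

lemma pairwise_disjoint_components {θ : ℤ → ℝ} (hθ : StrictMono θ) :
    Pairwise (Disjoint on fun k : ℤ => Icc (θ (2 * k - 1)) (θ (2 * k))) := by
  intro k l hkl
  wlog hlt : k < l generalizing k l
  · exact (this hkl.symm (hkl.lt_or_gt.resolve_left hlt)).symm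
  exact disjoint_left.2 fun t ht ht' =>
    (hθ (by omega : 2 * k < 2 * l - 1)).not_ge (ht'.1.trans ht.2)

lemma notMem_TScale_of_mem_gap {θ : ℤ → ℝ} (hθ : StrictMono θ) {k : ℤ} {t : ℝ}
    (h₁ : θ (2 * k) < t) (h₂ : t < θ (2 * k + 1)) : t ∉ TScale θ := by
  intro ht
  obtain ⟨j, hj⟩ := mem_iUnion.1 ht
  rcases le_or_gt j k with hjk | hjk
  · exact (hj.2.trans (hθ.monotone (by omega : 2 * j ≤ 2 * k))).not_gt h₁
  · exact (h₂.trans_le (hθ.monotone (by omega : 2 * k + 1 ≤ 2 * j - 1))).not_ge hj.1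

lemma exists_component_of_Icc_subset_TScale {θ : ℤ → ℝ} (hθ : StrictMono θ) {u v : ℝ}
    (huv : u ≤ v) (h : Icc u v ⊆ TScale θ) : ∃ k, θ (2 * k - 1) ≤ u ∧ v ≤ θ (2 * k) := by
  obtain ⟨k, hk⟩ := mem_iUnion.1 (h ⟨le_rfl, huv⟩)
  refine ⟨k, hk.1, not_lt.1 fun hv => ?_⟩
  -- a point of `[u, v]` inside the gap `(θ (2k), θ (2k+1))`
  have hgap : θ (2 * k) < θ (2 * k + 1) := hθ (by omega)
  set t := min v ((θ (2 * k) + θ (2 * k + 1)) / 2)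
  have ht₁ : θ (2 * k) < t := lt_min hv (by linarith)
  have ht₂ : t < θ (2 * k + 1) := (min_le_right _ _).trans_lt (by linarith)
  exact notMem_TScale_of_mem_gap hθ ht₁ ht₂ (h ⟨hk.2.trans ht₁.le, min_le_left _ _⟩)

lemma Function.Periodic.exists_pos_le {u : ℤ → ℝ} {p : ℤ} (hu : Periodic u p) (hp : 0 < p)
    (hpos : ∀ k, 0 < u k) : ∃ d > 0, ∀ k, d ≤ u k := by
  obtain ⟨j, -, hj⟩ := (Finset.Ico 0 p).exists_min_image u ⟨0, by simp [hp]⟩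
  refine ⟨u j, hpos j, fun k => ?_⟩
  have hk : k % p ∈ Finset.Ico 0 p :=
    Finset.mem_Ico.2 ⟨Int.emod_nonneg _ hp.ne', Int.emod_lt_of_pos _ hp⟩
  have hmod : u (k % p) = u k := by
    rw [Int.emod_def, mul_comm, ← smul_eq_mul, hu.sub_zsmul_eq]
  exact hmod ▸ hj _ hk

lemma add_mul_le_of_le_tdelta {θ : ℤ → ℝ} (hθ : StrictMono θ) {d : ℝ}
    (hd : ∀ k, d ≤ tdelta θ k) {k j : ℤ} (hkj : k < j) :
    θ (2 * k) + (j - k : ℤ) * d ≤ θ (2 * j - 1) := by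
  induction j, hkj using Int.leInduction with
  | base =>
    have h := hd k
    rw [tdelta] at h
    rw [show 2 * (k + 1) - 1 = 2 * k + 1 by ring]
    push_cast
    linarith
  | succ j hkj ih =>
    have h₁ := hd j
    have h₂ : θ (2 * j - 1) ≤ θ (2 * j) := hθ.monotone (by omega)
    rw [tdelta] at h₁
    rw [show 2 * (j + 1) - 1 = 2 * j + 1 by ring]
    push_cast at ih ⊢
    linarith

lemma Int.exists_mem_Ico_of_bounded_gaps {P : ℤ → Prop} {N : ℕ} {k₀ : ℤ} (h₀ : P k₀)
    (hstep : ∀ k, P k → ∃ k', k < k' ∧ k' ≤ k + N ∧ P k') :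
    ∀ K : ℤ, k₀ < K → ∃ k ∈ Ico (K - N) K, P k := by
  intro K hK
  replace hK : k₀ + 1 ≤ K := hK
  induction K, hK using Int.leInduction with
  | base =>
    obtain ⟨k', hk', hk'N, -⟩ := hstep k₀ h₀
    exact ⟨k₀, ⟨by omega, by omega⟩, h₀⟩
  | succ K _ ih =>
    obtain ⟨k, ⟨hk₁, hk₂⟩, hPk⟩ := ih
    by_cases hkK : K + 1 - N ≤ k
    · exact ⟨k, ⟨hkK, by omega⟩, hPk⟩
    · obtain ⟨k', hk', hk'N, hPk'⟩ := hstep k hPk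
      exact ⟨k', ⟨by omega, by omega⟩, hPk'⟩

lemma Int.frequently_and_of_bounded_gaps {P Q R : ℤ → Prop} {N : ℕ}
    (hQ : ∀ K : ℤ, 0 < K → ∃ k ∈ Ico (K - N) K, Q k) (hP : ∃ᶠ k in atTop, P k)
    (hPR : ∀ k, ∀ d ≤ N, P (k + d) → R k) : ∃ᶠ k in atTop, Q k ∧ R k := by
  refine frequently_atTop.2 fun K => ?_
  obtain ⟨k, hk, hPk⟩ := frequently_atTop.1 hP (max K 1 + N)
  obtain ⟨k', ⟨hk'₁, hk'₂⟩, hQk'⟩ := hQ k (by omega)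
  refine ⟨k', by omega, hQk', hPR k' (k - k').toNat (by omega) ?_⟩
  rwa [Int.toNat_of_nonneg (by omega), add_sub_cancel]

namespace TimeScaleHyp

variable {θ : ℤ → ℝ} {ω : ℝ} {p : ℕ}

lemma exists_pos_le_tdelta (hts : TimeScaleHyp θ ω p) : ∃ d > 0, ∀ k, d ≤ tdelta θ k :=
  Periodic.exists_pos_le hts.delta_periodic (by exact_mod_cast hts.p_pos)
    fun k => sub_pos.2 (hts.mono (by omega))

lemma exists_component_shift (hts : TimeScaleHyp θ ω p) (k : ℤ) :
    ∃ k', k < k' ∧ θ (2 * k' - 1) ≤ θ (2 * k - 1) + ω ∧ θ (2 * k) + ω ≤ θ (2 * k') := by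
  have hsub : Icc (θ (2 * k - 1) + ω) (θ (2 * k) + ω) ⊆ TScale θ := fun s hs => by
    simpa using hts.omega_prop (s - ω)
      (Icc_subset_TScale θ k ⟨by linarith [hs.1], by linarith [hs.2]⟩)
  have hk : θ (2 * k - 1) ≤ θ (2 * k) := hts.mono.monotone (by omega)
  obtain ⟨k', h₁, h₂⟩ := exists_component_of_Icc_subset_TScale hts.mono (by linarith) hsub
  have : 2 * k < 2 * k' := hts.mono.lt_iff_lt.1 (by linarith [hts.omega_pos])
  exact ⟨k', by omega, h₁, h₂⟩

lemma exists_long_components (hts : TimeScaleHyp θ ω p) :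
    ∃ η > 0, ∃ N : ℕ, ∀ K : ℤ, 0 < K → ∃ k ∈ Ico (K - N) K, η ≤ θ (2 * k) - θ (2 * k - 1) := by
  obtain ⟨d, hd, hδ⟩ := hts.exists_pos_le_tdelta
  refine ⟨θ 0 - θ (-1), sub_pos.2 (hts.mono (by norm_num)), ⌈ω / d⌉₊,
    Int.exists_mem_Ico_of_bounded_gaps (by norm_num) fun k hk => ?_⟩
  obtain ⟨k', hkk', h₁, h₂⟩ := hts.exists_component_shift k
  refine ⟨k', hkk', ?_, by linarith⟩
  -- the `k' - k` gaps between the two components have total length less than `ω`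
  by_contra! hfar
  have hgaps := add_mul_le_of_le_tdelta hts.mono hδ hkk'
  have hk : θ (2 * k - 1) < θ (2 * k) := hts.mono (by omega)
  have hN : ω ≤ ((k' - k : ℤ) : ℝ) * d := by
    have hfar' : (⌈ω / d⌉₊ : ℝ) ≤ ((k' - k : ℤ) : ℝ) := by
      exact_mod_cast (by omega : (⌈ω / d⌉₊ : ℤ) ≤ k' - k)
    rw [← div_le_iff₀ hd]
    exact (Nat.le_ceil _).trans hfar'
  linarith

end TimeScaleHyp

lemma UniformContinuousOn.exists_pos_le_dist_of_le_dist_add {α : Type*} [PseudoMetricSpace α]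
    {F : α → α} {Λ : Set α} (hF : UniformContinuousOn F Λ) {x y : ℤ → α}
    (hx : ∀ k, x (k + 1) = F (x k)) (hy : ∀ k, y (k + 1) = F (y k))
    (hxΛ : ∀ k, x k ∈ Λ) (hyΛ : ∀ k, y k ∈ Λ) (N : ℕ) {c : ℝ} (hc : 0 < c) :
    ∃ c' > 0, ∀ k : ℤ, ∀ d ≤ N, c ≤ dist (x (k + d)) (y (k + d)) → c' ≤ dist (x k) (y k) := by
  induction N generalizing c with
  | zero =>
    refine ⟨c, hc, fun k d hd h => ?_⟩
    obtain rfl : d = 0 := by omega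
    simpa using h
  | succ N ih =>
    obtain ⟨δ, hδ, hFδ⟩ := Metric.uniformContinuousOn_iff.1 hF c hc
    have hstep : ∀ k, c ≤ dist (x (k + 1)) (y (k + 1)) → min δ c ≤ dist (x k) (y k) :=
      fun k h => (min_le_left _ _).trans <| not_lt.1 fun hlt =>
        (hFδ _ (hxΛ k) _ (hyΛ k) hlt).not_ge (by rwa [← hx, ← hy])
    obtain ⟨c', hc', h'⟩ := ih (lt_min hδ hc)
    refine ⟨c', hc', fun k d hd h => ?_⟩
    rcases d with _ | d
    · exact h' k 0 (Nat.zero_le _) (by simpa using (min_le_right δ c).trans (by simpa using h))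
    · refine h' k d (by omega) (hstep _ ?_)
      simpa [add_assoc] using h

lemma exists_le_norm_of_norm_deriv_sub_le {E : Type*} [NormedAddCommGroup E] [NormedSpace ℝ E]
    {z z' : ℝ → E} {w : E} {u v Q e : ℝ} (huv : u ≤ v)
    (hz : ∀ t ∈ Icc u v, HasDerivWithinAt z (z' t) (Icc u v) t)
    (hz' : ∀ t ∈ Icc u v, ‖z' t - w‖ ≤ Q * ‖z t‖) (hQ : 0 ≤ Q) (hQe : Q * e ≤ ‖w‖ / 2)
    (hlen : 4 * e ≤ ‖w‖ * (v - u)) : ∃ t ∈ Icc u v, e ≤ ‖z t‖ := by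
  by_contra! hsmall
  -- while `z` stays small, `z t - t • w` moves slowly, yet `z` would then travel far
  have hdrift : ‖(z v - v • w) - (z u - u • w)‖ ≤ Q * e * ‖v - u‖ :=
    Convex.norm_image_sub_le_of_norm_hasDerivWithin_le
      (fun t ht => by simpa using (hz t ht).sub ((hasDerivWithinAt_id t _).smul_const w))
      (fun t ht => (hz' t ht).trans (mul_le_mul_of_nonneg_left (hsmall t ht).le hQ))
      (convex_Icc u v) (left_mem_Icc.2 huv) (right_mem_Icc.2 huv)
  have htravel : ‖(v - u) • w‖ ≤ ‖z v - z u‖ + ‖(z v - v • w) - (z u - u • w)‖ := by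
    have hsplit : (v - u) • w = (z v - z u) - ((z v - v • w) - (z u - u • w)) := by
      simp only [sub_smul]
      abel
    exact hsplit ▸ norm_sub_le _ _
  rw [norm_smul, Real.norm_of_nonneg (sub_nonneg.2 huv)] at htravel
  rw [Real.norm_of_nonneg (sub_nonneg.2 huv)] at hdrift
  have hzuv : ‖z v - z u‖ < 2 * e := by
    linarith [norm_sub_le (z v) (z u), hsmall u (left_mem_Icc.2 huv),
      hsmall v (right_mem_Icc.2 huv)]
  nlinarith [mul_le_mul_of_nonneg_right hQe (sub_nonneg.2 huv)]

lemma exists_Icc_forall_sub_le_norm {E : Type*} [SeminormedAddCommGroup E] {z : ℝ → E}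
    {u v M ε e t₀ : ℝ} (hz : ∀ s ∈ Icc u v, ∀ t ∈ Icc u v, ‖z s - z t‖ ≤ M * |s - t|)
    (hM : 0 ≤ M) (hε : 0 ≤ ε) (hlen : ε ≤ v - u) (ht₀ : t₀ ∈ Icc u v) (he : e ≤ ‖z t₀‖) :
    ∃ x, Icc x (x + ε) ⊆ Icc u v ∧ ∀ t ∈ Icc x (x + ε), e - M * ε ≤ ‖z t‖ := by
  have hx₁ : min t₀ (v - ε) ≤ t₀ := min_le_left _ _
  have hx₂ : t₀ - ε ≤ min t₀ (v - ε) := le_min (by linarith) (by linarith [ht₀.2])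
  have hsub : Icc (min t₀ (v - ε)) (min t₀ (v - ε) + ε) ⊆ Icc u v := fun t ht =>
    ⟨(le_min ht₀.1 (by linarith)).trans ht.1, ht.2.trans (by linarith [min_le_right t₀ (v - ε)])⟩
  refine ⟨min t₀ (v - ε), hsub, fun t ht => ?_⟩
  have hdist : M * |t - t₀| ≤ M * ε :=
    mul_le_mul_of_nonneg_left (abs_le.2 ⟨by linarith [ht.1], by linarith [ht.2]⟩) hM
  linarith [norm_sub_norm_le (z t₀) (z t), norm_sub_rev (z t₀) (z t), hz t (hsub ht) t₀ ht₀]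

lemma exists_pos_forall_exists_Icc_lt_norm {E : Type*} [NormedAddCommGroup E]
    [NormedSpace ℝ E] {Q M c η : ℝ} (hQ : 0 ≤ Q) (hM : 0 ≤ M) (hc : 0 < c) (hη : 0 < η) :
    ∃ ε₀ > 0, ∃ ε₁ > 0, ∀ (z z' : ℝ → E) (w : E) (u v : ℝ), η ≤ v - u → c ≤ ‖w‖ →
      (∀ t ∈ Icc u v, HasDerivWithinAt z (z' t) (Icc u v) t) →
      (∀ t ∈ Icc u v, ‖z' t - w‖ ≤ Q * ‖z t‖) → (∀ t ∈ Icc u v, ‖z' t‖ ≤ M) →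
      ∃ s, Icc s (s + ε₁) ⊆ Icc u v ∧ ∀ t ∈ Icc s (s + ε₁), ε₀ < ‖z t‖ := by
  set e := min (c / (2 * (Q + 1))) (c * η / 4)
  have he : 0 < e := lt_min (by positivity) (by positivity)
  have hQe : Q * e ≤ c / 2 := by
    have h : e * (2 * (Q + 1)) ≤ c := (le_div_iff₀ (by positivity)).1 (min_le_left _ _)
    nlinarith
  set ε₁ := min η (e / (4 * (M + 1)))
  have hε₁ : 0 < ε₁ := lt_min hη (by positivity)
  have hMε₁ : M * ε₁ ≤ e / 4 := by
    have h : ε₁ * (4 * (M + 1)) ≤ e := (le_div_iff₀ (by positivity)).1 (min_le_right _ _)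
    nlinarith
  refine ⟨e / 2, half_pos he, ε₁, hε₁, fun z z' w u v hlen hw hz hz' hzM => ?_⟩
  have huv : u ≤ v := by linarith
  have h4e : 4 * e ≤ ‖w‖ * (v - u) := calc
    4 * e ≤ c * η := by linarith [min_le_right (c / (2 * (Q + 1))) (c * η / 4)]
    _ ≤ ‖w‖ * (v - u) := mul_le_mul hw hlen hη.le (hc.le.trans hw)
  obtain ⟨t₀, ht₀, hzt₀⟩ :=
    exists_le_norm_of_norm_deriv_sub_le (e := e) huv hz hz' hQ (by linarith) h4e
  have hlip : ∀ s ∈ Icc u v, ∀ t ∈ Icc u v, ‖z s - z t‖ ≤ M * |s - t| := fun s hs t ht => by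
    simpa [Real.norm_eq_abs] using
      Convex.norm_image_sub_le_of_norm_hasDerivWithin_le hz hzM (convex_Icc u v) ht hs
  obtain ⟨s, hs, hsep⟩ := exists_Icc_forall_sub_le_norm hlip hM hε₁.le
    ((min_le_left _ _).trans hlen) ht₀ hzt₀
  exact ⟨s, hs, fun t ht => by linarith [hsep t ht]⟩

section SICNN

variable {m n r : ℕ} {a : Fin m → Fin n → ℝ} {C : Fin m → Fin n → Fin m → Fin n → ℝ}
  {f : ℝ → ℝ} {Mf Lf : ℝ}

lemma abs_apply_apply_le_norm (v : Fin m → Fin n → ℝ) (i : Fin m) (j : Fin n) :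
    |v i j| ≤ ‖v‖ :=
  (norm_le_pi_norm (v i) j).trans (norm_le_pi_norm v i)

lemma abs_interSum_sub_le (hC : ∀ i j i' j', 0 ≤ C i j i' j') (hf_bdd : ∀ s, |f s| ≤ Mf)
    (hf_lip : ∀ s₁ s₂, |f s₁ - f s₂| ≤ Lf * |s₁ - s₂|) {x x' : Fin m → Fin n → ℝ} {H : ℝ}
    (hx' : ‖x'‖ ≤ H) (i : Fin m) (j : Fin n) :
    |interSum r C f x i j - interSum r C f x' i j| ≤
      coupSum r C i j * ((Mf + Lf * H) * ‖x - x'‖) := by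
  have hMf : 0 ≤ Mf := (abs_nonneg _).trans (hf_bdd 0)
  have hLf : 0 ≤ Lf := by simpa using (abs_nonneg _).trans (hf_lip 1 0)
  unfold interSum coupSum
  rw [← Finset.sum_sub_distrib, Finset.sum_mul]
  refine (Finset.abs_sum_le_sum_abs _ _).trans (Finset.sum_le_sum fun q _ => ?_)
  have hij : |x i j - x' i j| ≤ ‖x - x'‖ := abs_apply_apply_le_norm (x - x') i j
  have hq : |x q.1 q.2 - x' q.1 q.2| ≤ ‖x - x'‖ := abs_apply_apply_le_norm (x - x') q.1 q.2
  have hx'ij : |x' i j| ≤ H := (abs_apply_apply_le_norm x' i j).trans hx'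
  rw [show C i j q.1 q.2 * f (x q.1 q.2) * x i j - C i j q.1 q.2 * f (x' q.1 q.2) * x' i j =
      C i j q.1 q.2 * (f (x q.1 q.2) * (x i j - x' i j) +
        (f (x q.1 q.2) - f (x' q.1 q.2)) * x' i j) by ring,
    abs_mul, abs_of_nonneg (hC i j q.1 q.2)]
  refine mul_le_mul_of_nonneg_left ((abs_add_le _ _).trans ?_) (hC i j q.1 q.2)
  rw [abs_mul, abs_mul]
  calc |f (x q.1 q.2)| * |x i j - x' i j| + |f (x q.1 q.2) - f (x' q.1 q.2)| * |x' i j|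
      ≤ Mf * ‖x - x'‖ + Lf * ‖x - x'‖ * H := by
        refine add_le_add (mul_le_mul (hf_bdd _) hij (abs_nonneg _) hMf)
          (mul_le_mul ?_ hx'ij (abs_nonneg _) (by positivity))
        exact (hf_lip _ _).trans (mul_le_mul_of_nonneg_left hq hLf)
    _ = (Mf + Lf * H) * ‖x - x'‖ := by ring

def sicnnField (r : ℕ) (a : Fin m → Fin n → ℝ) (C : Fin m → Fin n → Fin m → Fin n → ℝ)
    (f : ℝ → ℝ) (w x : Fin m → Fin n → ℝ) : Fin m → Fin n → ℝ :=
  fun i j => -(a i j) * x i j - interSum r C f x i j + w i j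

lemma norm_sicnnField_sub_sub_le (hC : ∀ i j i' j', 0 ≤ C i j i' j')
    (hf_bdd : ∀ s, |f s| ≤ Mf) (hf_lip : ∀ s₁ s₂, |f s₁ - f s₂| ≤ Lf * |s₁ - s₂|)
    {w w' x x' : Fin m → Fin n → ℝ} {H : ℝ} (hx' : ‖x'‖ ≤ H) :
    ‖sicnnField r a C f w x - sicnnField r a C f w' x' - (w - w')‖ ≤
      (‖a‖ + (Mf + Lf * H) * ‖coupSum r C‖) * ‖x - x'‖ := by
  have hMf : 0 ≤ Mf := (abs_nonneg _).trans (hf_bdd 0)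
  have hLf : 0 ≤ Lf := by simpa using (abs_nonneg _).trans (hf_lip 1 0)
  have hH : 0 ≤ H := (norm_nonneg _).trans hx'
  refine (pi_norm_le_iff_of_nonneg (by positivity)).2 fun i =>
    (pi_norm_le_iff_of_nonneg (by positivity)).2 fun j => ?_
  rw [Real.norm_eq_abs]
  have ha : |a i j * (x i j - x' i j)| ≤ ‖a‖ * ‖x - x'‖ := by
    rw [abs_mul]
    exact mul_le_mul (abs_apply_apply_le_norm a i j) (abs_apply_apply_le_norm (x - x') i j)
      (abs_nonneg _) (norm_nonneg _)
  have hI : coupSum r C i j * ((Mf + Lf * H) * ‖x - x'‖) ≤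
      ‖coupSum r C‖ * ((Mf + Lf * H) * ‖x - x'‖) :=
    mul_le_mul_of_nonneg_right ((le_abs_self _).trans (abs_apply_apply_le_norm _ i j))
      (by positivity)
  have hsplit : (sicnnField r a C f w x - sicnnField r a C f w' x' - (w - w')) i j =
      -(a i j * (x i j - x' i j)) - (interSum r C f x i j - interSum r C f x' i j) := by
    simp only [sicnnField, Pi.sub_apply]
    ring
  rw [hsplit]
  refine (abs_sub _ _).trans ?_
  rw [abs_neg]
  nlinarith [abs_interSum_sub_le (r := r) (x := x) hC hf_bdd hf_lip hx' i j]

variable {θ : ℤ → ℝ} {L : ℝ → Fin m → Fin n → ℝ} {ζ : ℤ → Fin m → Fin n → ℝ}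
  {x : ℝ → Fin m → Fin n → ℝ}

lemma IsSICNNSol.hasDerivWithinAt (hx : IsSICNNSol θ r a C f L ζ x)
    (hL : ∀ k : ℤ, ∀ t ∈ Icc (θ (2 * k - 1)) (θ (2 * k)), ∀ i j, L t i j = ζ k i j) {k : ℤ}
    {t : ℝ} (ht : t ∈ Icc (θ (2 * k - 1)) (θ (2 * k))) :
    HasDerivWithinAt x (sicnnField r a C f (ζ k) (x t)) (Icc (θ (2 * k - 1)) (θ (2 * k))) t :=
  hasDerivWithinAt_pi.2 fun i => hasDerivWithinAt_pi.2 fun j => by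
    simpa only [sicnnField, hL k t ht i j] using hx.1 k t ht i j


lemma IsSICNNSol.exists_pos_forall_exists_Icc_lt_norm_sub {L' : ℝ → Fin m → Fin n → ℝ}
    {ζ' : ℤ → Fin m → Fin n → ℝ} {φ φ' : ℝ → Fin m → Fin n → ℝ} {H0 W η c : ℝ}
    (hφ : IsSICNNSol θ r a C f L ζ φ) (hφ' : IsSICNNSol θ r a C f L' ζ' φ')
    (hL : ∀ k : ℤ, ∀ t ∈ Icc (θ (2 * k - 1)) (θ (2 * k)), ∀ i j, L t i j = ζ k i j)
    (hL' : ∀ k : ℤ, ∀ t ∈ Icc (θ (2 * k - 1)) (θ (2 * k)), ∀ i j, L' t i j = ζ' k i j)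
    (hφb : ∀ t ∈ TScale θ, ‖φ t‖ ≤ H0) (hφ'b : ∀ t ∈ TScale θ, ‖φ' t‖ ≤ H0) (hH0 : 0 ≤ H0)
    (hC : ∀ i j i' j', 0 ≤ C i j i' j') (hf_bdd : ∀ s, |f s| ≤ Mf)
    (hf_lip : ∀ s₁ s₂, |f s₁ - f s₂| ≤ Lf * |s₁ - s₂|) (hW : ∀ k, ‖ζ k - ζ' k‖ ≤ W)
    (hη : 0 < η) (hc : 0 < c) :
    ∃ ε₀ > 0, ∃ ε₁ > 0, ∀ k, η ≤ θ (2 * k) - θ (2 * k - 1) → c ≤ ‖ζ k - ζ' k‖ →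
      ∃ s, Icc s (s + ε₁) ⊆ Icc (θ (2 * k - 1)) (θ (2 * k)) ∧
        ∀ t ∈ Icc s (s + ε₁), ε₀ < ‖φ t - φ' t‖ := by
  set Q := ‖a‖ + (Mf + Lf * H0) * ‖coupSum r C‖
  have hMf : 0 ≤ Mf := (abs_nonneg _).trans (hf_bdd 0)
  have hLf : 0 ≤ Lf := by simpa using (abs_nonneg _).trans (hf_lip 1 0)
  have hW0 : 0 ≤ W := (norm_nonneg _).trans (hW 0)
  obtain ⟨ε₀, hε₀, ε₁, hε₁, hsep⟩ := exists_pos_forall_exists_Icc_lt_norm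
    (E := Fin m → Fin n → ℝ) (Q := Q) (M := Q * (2 * H0) + W) (by positivity) (by positivity)
    hc hη
  refine ⟨ε₀, hε₀, ε₁, hε₁, fun k hk hck => hsep (fun t => φ t - φ' t)
    (fun t => sicnnField r a C f (ζ k) (φ t) - sicnnField r a C f (ζ' k) (φ' t)) _ _ _ hk hck
    (fun t ht => (hφ.hasDerivWithinAt hL ht).sub (hφ'.hasDerivWithinAt hL' ht))
    (fun t ht => norm_sicnnField_sub_sub_le hC hf_bdd hf_lip (hφ'b t (Icc_subset_TScale θ k ht)))
    fun t ht => ?_⟩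
  have hT := Icc_subset_TScale θ k ht
  have hnear := norm_sicnnField_sub_sub_le (a := a) (r := r) (w := ζ k) (w' := ζ' k) (x := φ t)
    hC hf_bdd hf_lip (hφ'b t hT)
  have hdiff : ‖φ t - φ' t‖ ≤ 2 * H0 := by
    linarith [norm_sub_le (φ t) (φ' t), hφb t hT, hφ'b t hT]
  calc _ ≤ ‖sicnnField r a C f (ζ k) (φ t) - sicnnField r a C f (ζ' k) (φ' t) - (ζ k - ζ' k)‖
        + ‖ζ k - ζ' k‖ := norm_le_norm_sub_add _ _
    _ ≤ Q * (2 * H0) + W := add_le_add (hnear.trans (by gcongr)) (hW k)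

end SICNN

lemma freqSepPair_of_frequently {θ : ℤ → ℝ} (hθ : StrictMono θ) {m n : ℕ}
    {x x' : ℝ → Fin m → Fin n → ℝ} {ε₀ ε₁ : ℝ} (hε₀ : 0 < ε₀) (hε₁ : 0 < ε₁)
    (h : ∃ᶠ k : ℤ in atTop, ∃ s, Icc s (s + ε₁) ⊆ Icc (θ (2 * k - 1)) (θ (2 * k)) ∧
      ∀ t ∈ Icc s (s + ε₁), ε₀ < ‖x t - x' t‖) :
    FreqSepPair θ x x' := by
  rw [← Nat.map_cast_int_atTop, frequently_map] at h
  obtain ⟨κ, hκ, hgood⟩ := extraction_of_frequently_atTop h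
  choose s hs hsep using hgood
  refine ⟨ε₀, hε₀, ε₁, hε₁, fun q => Icc (s q) (s q + ε₁),
    fun q => (hs q).trans (Icc_subset_TScale θ _), fun q => ordConnected_Icc,
    fun q => by rw [Real.diam_Icc (by linarith)]; linarith, fun q q' hqq' => ?_, hsep⟩
  exact (pairwise_disjoint_components hθ (by simpa using hκ.injective.ne hqq')).mono (hs q) (hs q')

theorem frequently_separated_solutions_general
    (θ : ℤ → ℝ) (ω : ℝ) (p : ℕ) (hts : TimeScaleHyp θ ω p)
    (m n r : ℕ) (a : Fin m → Fin n → ℝ)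
    (C : Fin m → Fin n → Fin m → Fin n → ℝ) (hCpos : ∀ i j i' j', 0 ≤ C i j i' j')
    (f : ℝ → ℝ)
    (Λ : Set (Fin m → Fin n → ℝ)) (hΛ : IsCompact Λ)
    (F : (Fin m → Fin n → ℝ) → Fin m → Fin n → ℝ) (hF : ContinuousOn F Λ)
    (Mf : ℝ) (hC3 : ∀ s : ℝ, |f s| ≤ Mf)
    (Lf : ℝ) (hC4 : ∀ s₁ s₂ : ℝ, |f s₁ - f s₂| ≤ Lf * |s₁ - s₂|)
    (H0 : ℝ)
    (ζ : ℤ → Fin m → Fin n → ℝ) (hζF : ∀ k : ℤ, ζ (k + 1) = F (ζ k))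
    (hζΛ : ∀ k : ℤ, ζ k ∈ Λ)
    (L : ℝ → Fin m → Fin n → ℝ)
    (hL : ∀ k : ℤ, ∀ t ∈ Set.Icc (θ (2 * k - 1)) (θ (2 * k)), ∀ i j, L t i j = ζ k i j)
    (ζ' : ℤ → Fin m → Fin n → ℝ) (hζ'F : ∀ k : ℤ, ζ' (k + 1) = F (ζ' k))
    (hζ'Λ : ∀ k : ℤ, ζ' k ∈ Λ)
    (L' : ℝ → Fin m → Fin n → ℝ)
    (hL' : ∀ k : ℤ, ∀ t ∈ Set.Icc (θ (2 * k - 1)) (θ (2 * k)), ∀ i j, L' t i j = ζ' k i j)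
    (φ : ℝ → Fin m → Fin n → ℝ)
    (hφ : IsSICNNSol θ r a C f L ζ φ) (hφb : ∀ t ∈ TScale θ, ‖φ t‖ ≤ H0)
    (φ' : ℝ → Fin m → Fin n → ℝ)
    (hφ' : IsSICNNSol θ r a C f L' ζ' φ') (hφ'b : ∀ t ∈ TScale θ, ‖φ' t‖ ≤ H0)
    (hfs : 0 < Filter.limsup (fun k : ℤ => ‖ζ k - ζ' k‖) atTop) :
    FreqSepPair θ φ φ' := by
  have hH0_nonneg : 0 ≤ H0 := (norm_nonneg _).trans <| hφb _ <|
    Icc_subset_TScale θ 0 (right_mem_Icc.2 (hts.mono.monotone (by norm_num)))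
  obtain ⟨R, hR⟩ := hΛ.isBounded.exists_norm_le
  obtain ⟨η, hη, N, hlong⟩ := hts.exists_long_components
  obtain ⟨c, hc, hc_lt⟩ := exists_between hfs
  have hfreq : ∃ᶠ k in atTop, c ≤ ‖ζ k - ζ' k‖ :=
    (frequently_lt_of_lt_limsup (isCoboundedUnder_le_of_le atTop fun k => norm_nonneg _)
      hc_lt).mono fun _ => le_of_lt
  obtain ⟨c', hc', hback⟩ := (hΛ.uniformContinuousOn_of_continuous hF
    ).exists_pos_le_dist_of_le_dist_add hζF hζ'F hζΛ hζ'Λ N hc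
  obtain ⟨ε₀, hε₀, ε₁, hε₁, hsep⟩ := hφ.exists_pos_forall_exists_Icc_lt_norm_sub hφ' hL hL'
    hφb hφ'b hH0_nonneg hCpos hC3 hC4
    (fun k => norm_sub_le_of_le (hR _ (hζΛ k)) (hR _ (hζ'Λ k))) hη hc'
  refine freqSepPair_of_frequently hts.mono hε₀ hε₁ <|
    (Int.frequently_and_of_bounded_gaps hlong hfreq fun k d hd h => ?_).mono
      fun k hk => hsep k hk.1 hk.2
  simpa only [dist_eq_norm] using hback k d hd (by rwa [dist_eq_norm])

/-- **Lemma 4.2.**  Under (C1)–(C5), if a pair of sequences `ζ, ζ̃` is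
frequently separated, then the pair of bounded solutions `φ_ζ, φ_ζ̃` of the SICNN is
frequently `(ε₀, ε₁)`-separated for some `ε₀, ε₁ > 0`. -/
theorem frequently_separated_solutions
    (θ : ℤ → ℝ) (ω : ℝ) (p : ℕ) (hts : TimeScaleHyp θ ω p) 
    (m n r : ℕ) (a : Fin m → Fin n → ℝ) (ha : ∀ i j, 0 < a i j)
    (C : Fin m → Fin n → Fin m → Fin n → ℝ) (hCpos : ∀ i j i' j', 0 ≤ C i j i' j')
    (f : ℝ → ℝ) (hf : Continuous f) 
    (Λ : Set (Fin m → Fin n → ℝ)) (hΛ : IsCompact Λ)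
    (F : (Fin m → Fin n → ℝ) → Fin m → Fin n → ℝ) (hF : ContinuousOn F Λ)
    (hFmap : Set.MapsTo F Λ Λ) 
    (hC1 : ∀ (i : Fin m) (j : Fin n) (k : ℤ), tdelta θ k * a i j ≠ 1)
    (lam : ℝ) (hlam : IsLeast {x : ℝ | ∃ i j, x = lamij θ ω p (a i j)} lam)
    (hC2 : 0 < lam)
    (Mf : ℝ) (hMf : 0 < Mf) (hC3 : ∀ s : ℝ, |f s| ≤ Mf)
    (Lf : ℝ) (hLf : 0 < Lf) (hC4 : ∀ s₁ s₂ : ℝ, |f s₁ - f s₂| ≤ Lf * |s₁ - s₂|) 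
    (K : Fin m → Fin n → ℝ) (hKpos : ∀ i j, 0 < K i j)
    (hK : ∀ (i : Fin m) (j : Fin n) (s τ : ℝ), τ ≤ s →
      |ufun θ (a i j) s τ| ≤ K i j * Real.exp (-(lamij θ ω p (a i j)) * (s - τ)))
    (δm : ℝ) (hδm : IsGreatest (tdelta θ '' Set.Icc (1 : ℤ) (p : ℤ)) δm)
    (cb : ℝ) (hcb : IsGreatest {x : ℝ | ∃ i j, x =
      (K i j / lamij θ ω p (a i j) +
        (p : ℝ) * δm * K i j / (1 - Real.exp (-(lamij θ ω p (a i j)) * psi θ ω))) *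
      coupSum r C i j} cb)
    (hMfcb : Mf * cb < 1)
    (MF : ℝ) (hMF : IsGreatest ((fun η => ‖F η‖) '' Λ) MF)
    (κ : ℝ) (hκ : IsGreatest {x : ℝ | ∃ i j, x =
      K i j / lamij θ ω p (a i j) +
        (p : ℝ) * δm * K i j / (1 - Real.exp (-(lamij θ ω p (a i j)) * psi θ ω))} κ)
    (H0 : ℝ) (hH0 : H0 = MF / (1 - Mf * cb) * κ)
    (hC5 : (Mf + H0 * Lf) * cb < 1) 
    (ζ : ℤ → Fin m → Fin n → ℝ) (hζF : ∀ k : ℤ, ζ (k + 1) = F (ζ k))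
    (hζΛ : ∀ k : ℤ, ζ k ∈ Λ)
    (L : ℝ → Fin m → Fin n → ℝ)
    (hL : ∀ k : ℤ, ∀ t ∈ Set.Icc (θ (2 * k - 1)) (θ (2 * k)), ∀ i j, L t i j = ζ k i j) 
    (ζ' : ℤ → Fin m → Fin n → ℝ) (hζ'F : ∀ k : ℤ, ζ' (k + 1) = F (ζ' k))
    (hζ'Λ : ∀ k : ℤ, ζ' k ∈ Λ)
    (L' : ℝ → Fin m → Fin n → ℝ)
    (hL' : ∀ k : ℤ, ∀ t ∈ Set.Icc (θ (2 * k - 1)) (θ (2 * k)), ∀ i j, L' t i j = ζ' k i j)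
    (φ : ℝ → Fin m → Fin n → ℝ)
    (hφ : IsSICNNSol θ r a C f L ζ φ) (hφb : ∀ t ∈ TScale θ, ‖φ t‖ ≤ H0)
    (φ' : ℝ → Fin m → Fin n → ℝ)
    (hφ' : IsSICNNSol θ r a C f L' ζ' φ') (hφ'b : ∀ t ∈ TScale θ, ‖φ' t‖ ≤ H0)
    (hfs : 0 < Filter.limsup (fun k : ℤ => ‖ζ k - ζ' k‖) atTop) :
    FreqSepPair θ φ φ' :=
  frequently_separated_solutions_general θ ω p hts m n r a C hCpos f Λ hΛ F hF Mf hC3 Lf hC4 H0 ζ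
    hζF hζΛ L hL ζ' hζ'F hζ'Λ L' hL' φ hφ hφb φ' hφ' hφ'b hfs
end
end
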